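/- arXiv:1405.4729 — 3 statements merged into one kernel-verified Lean document; each statement's English description precedes it below -/
import Mathlib

section
/- Let R be a k-linear category, S a full subcategory, and res: Mod R → Mod S the restriction functor with left adjoint K_L and right adjoint K_R. An R-module M is stable (i.e. Hom(S,M)=0 for all modules S supported away from S) if and only if the adjunction unit M → K_R(res M) is injective. -/
/-!
STATEMENT 0: Let `R` be a `k`-linear category, `S` a full subcategory (given by a fully
faithful embedding `ι : S ⥤ R`), and `res : Mod R → Mod S` the restriction functor with
right adjoint `K_R`.  An `R`-module `M` is stable (i.e. `Hom(N, M) = 0` for every module `N`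
supported away from `S`) if and only if the adjunction unit `M → K_R (res M)` is injective
(a monomorphism).
-/

open CategoryTheory CategoryTheory.Limits Opposite

/-- Modules over a `k`-category `C`: functors `Cᵒᵖ ⥤ CMod k`. -/
abbrev CMod (k : Type) [Field k] (C : Type) [SmallCategory C] : Type 1 :=
  Cᵒᵖ ⥤ ModuleCat k

/-- The restriction functor along a functor `ι : S ⥤ R`. -/
noncomputable def resF (k : Type) [Field k] {S R : Type} [SmallCategory S]
    [SmallCategory R] (ι : S ⥤ R) : CMod k R ⥤ CMod k S :=
  (Functor.whiskeringLeft Sᵒᵖ Rᵒᵖ (ModuleCat k)).obj ι.op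

/-- A module `N` over `R` is supported away from the subcategory `S` if it vanishes on
all objects of `S`. -/
def SupportedAway (k : Type) [Field k] {S R : Type} [SmallCategory S] [SmallCategory R]
    (ι : S ⥤ R) (N : CMod k R) : Prop :=
  ∀ s : S, IsZero (N.obj (op (ι.obj s)))


/-!
A module `N` supported away from `S` has `res N = 0`, so for every `f : N ⟶ M` naturality gives
`f ≫ η_M = η_N ≫ KR (res f) = 0`; a mono `η_M` forces `f = 0`.
Conversely, the triangle identity makes `res η_M` a split mono, so `ker η_M` is supported away
from `S`; stability kills its inclusion, hence `η_M` is mono.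
-/

namespace CategoryTheory

lemma Adjunction.comp_unit_app_eq_zero {C D : Type*} [Category C] [Category D]
    [HasZeroMorphisms C] {F : C ⥤ D} {G : D ⥤ C} (adj : F ⊣ G) {N M : C}
    (hN : IsZero (F.obj N)) (f : N ⟶ M) : f ≫ adj.unit.app M = 0 := by
  have hFf : F.map f = F.map 0 := hN.eq_of_src _ _
  rw [← adj.unit_naturality, hFf, adj.unit_naturality, zero_comp]

lemma isZero_kernel_obj_of_mono_app {J V : Type*} [Category J] [Category V]
    [HasZeroMorphisms V] [HasLimitsOfShape WalkingParallelPair V]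
    {X Y : J ⥤ V} (u : X ⟶ Y) (j : J) [Mono (u.app j)] : IsZero ((kernel u).obj j) :=
  (isZero_kernel_of_mono (u.app j)).of_iso
    (PreservesKernel.iso ((evaluation J V).obj j) u)

lemma isSplitMono_unit_app_app {A B V : Type*} [Category A] [Category B] [Category V]
    (ι : A ⥤ B) {G : (A ⥤ V) ⥤ (B ⥤ V)} (adj : (Functor.whiskeringLeft A B V).obj ι ⊣ G)
    (M : B ⥤ V) (a : A) : IsSplitMono ((adj.unit.app M).app (ι.obj a)) :=
  IsSplitMono.mk' ⟨(adj.counit.app (ι ⋙ M)).app a,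
    congrArg (fun t => NatTrans.app t a) (adj.left_triangle_components M)⟩

end CategoryTheory

section

variable {k : Type} [Field k] {S R : Type} [SmallCategory S] [SmallCategory R] {ι : S ⥤ R}

lemma SupportedAway.isZero_resF {N : CMod k R} (hN : SupportedAway k ι N) :
    IsZero ((resF k ι).obj N) :=
  Functor.isZero _ fun s => hN s.unop

lemma supportedAway_kernel_unit_app {KR : CMod k S ⥤ CMod k R} (adj : resF k ι ⊣ KR)
    (M : CMod k R) : SupportedAway k ι (kernel (adj.unit.app M)) := fun s =>
  have : Mono ((adj.unit.app M).app (op (ι.obj s))) :=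
    (isSplitMono_unit_app_app ι.op adj M (op s)).mono
  isZero_kernel_obj_of_mono_app _ _

end

theorem stable_iff_unit_mono_general
    (k : Type) [Field k]
    (S R : Type) [SmallCategory S] [SmallCategory R]
    (ι : S ⥤ R)
    (KR : CMod k S ⥤ CMod k R) (adj : resF k ι ⊣ KR)
    (M : CMod k R) :
    (∀ N : CMod k R, SupportedAway k ι N → ∀ f : N ⟶ M, f = 0)
      ↔ Mono (adj.unit.app M) := by
  constructor
  · intro hstable
    exact Preadditive.mono_of_kernel_zero (hstable _ (supportedAway_kernel_unit_app adj M) _)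
  · intro _ N hN f
    rw [← cancel_mono (adj.unit.app M), zero_comp]
    exact adj.comp_unit_app_eq_zero hN.isZero_resF f

theorem stable_iff_unit_mono
    (k : Type) [Field k]
    (S R : Type) [SmallCategory S] [SmallCategory R]
    [Preadditive S] [Preadditive R] [CategoryTheory.Linear k S] [CategoryTheory.Linear k R]
    (ι : S ⥤ R) [ι.Full] [ι.Faithful]
    (KR : CMod k S ⥤ CMod k R) (adj : resF k ι ⊣ KR)
    (M : CMod k R) :
    (∀ N : CMod k R, SupportedAway k ι N → ∀ f : N ⟶ M, f = 0)
      ↔ Mono (adj.unit.app M) :=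
  stable_iff_unit_mono_general k S R ι KR adj M
end

section
/- Let R be a k-linear category, S a full subcategory, res: Mod R → Mod S restriction with right adjoint K_R. The adjunction unit M → K_R(res M) is invertible if and only if M is stable and Ext^1(N, M) = 0 for all modules N in the kernel of res. -/
open CategoryTheory CategoryTheory.Limits Opposite

/-- `M` is stable: no nonzero submodule supported away from `S`; equivalently
`Hom(N, M) = 0` for every module `N` supported away from `S`. -/
def Stable (k : Type) [Field k] {S R : Type} [SmallCategory S] [SmallCategory R]
    (ι : S ⥤ R) (M : CMod k R) : Prop :=
  ∀ N : CMod k R, SupportedAway k ι N → ∀ f : N ⟶ M, f = 0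

/-- `M` is costable: no nonzero quotient supported away from `S`; equivalently
`Hom(M, N) = 0` for every module `N` supported away from `S`. -/
def Costable (k : Type) [Field k] {S R : Type} [SmallCategory S] [SmallCategory R]
    (ι : S ⥤ R) (M : CMod k R) : Prop :=
  ∀ N : CMod k R, SupportedAway k ι N → ∀ f : M ⟶ N, f = 0

/-- `Ext¹(N, M) = 0`, expressed via the splitting of all short exact sequences
`0 → M → E → N → 0` in the abelian category `C`. -/
def Ext1Vanishes {C : Type 1} [Category C] [Abelian C] (N M : C) : Prop :=
  ∀ (Sc : ShortComplex C), Sc.ShortExact → (Sc.X₁ ≅ M) → (Sc.X₃ ≅ N) →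
    Nonempty Sc.Splitting

/-! Since `ι` is fully faithful, `res` inverts the unit `η : M ⟶ KR (res M)`, so its kernel and
cokernel are supported away from `S`; and no nonzero map from a module supported away from `S`
lands in the image of `KR`. Hence `η` is mono iff `M` is stable, and a mono `η` is invertible iff
the extension `0 → M → KR (res M) → coker η → 0` splits. Conversely, if `η` is invertible, every
extension of a module supported away from `S` by `M` becomes invertible under `res`, and the
adjunction turns the inverse into a retraction. -/

namespace CategoryTheory

variable {C D : Type*} [Category C] [Category D]

lemma Adjunction.hom_eq_zero_of_isZero_obj [HasZeroMorphisms C] {F : C ⥤ D} {G : D ⥤ C}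
    (adj : F ⊣ G) {X : C} (hX : IsZero (F.obj X)) {Y : D} (f : X ⟶ G.obj Y) : f = 0 :=
  (adj.homEquiv X Y).symm.injective (hX.eq_of_src _ _)

lemma Adjunction.isSplitMono_of_isIso_unit_app_of_isIso_map {F : C ⥤ D} {G : D ⥤ C}
    (adj : F ⊣ G) {X Y : C} (f : X ⟶ Y) [IsIso (adj.unit.app X)] [IsIso (F.map f)] :
    IsSplitMono f :=
  IsSplitMono.mk' ⟨adj.unit.app Y ≫ G.map (inv (F.map f)) ≫ inv (adj.unit.app X), by
    simp [← adj.unit_naturality_assoc]⟩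

lemma ShortComplex.Splitting.isIso_f_of_s_eq_zero [Preadditive C] {Sc : ShortComplex C}
    (sp : Sc.Splitting) (hs : sp.s = 0) : IsIso Sc.f :=
  ⟨sp.r, sp.f_r, by rw [sp.r_f, hs, comp_zero, sub_zero]⟩

end CategoryTheory

section Restriction

variable (k : Type) [Field k] {S R : Type} [SmallCategory S] [SmallCategory R] (ι : S ⥤ R)

instance : PreservesFiniteLimits (resF k ι) := by
  unfold resF; infer_instance

instance : PreservesFiniteColimits (resF k ι) := by
  unfold resF; infer_instance

variable {k ι}

lemma supportedAway_iff_isZero_resF_obj {N : CMod k R} :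
    SupportedAway k ι N ↔ IsZero ((resF k ι).obj N) :=
  ⟨fun hN => Functor.isZero _ fun s => hN s.unop, fun hN s => hN.obj (op s)⟩

lemma SupportedAway.of_iso {N N' : CMod k R} (e : N ≅ N') (hN' : SupportedAway k ι N') :
    SupportedAway k ι N :=
  supportedAway_iff_isZero_resF_obj.2 <|
    (supportedAway_iff_isZero_resF_obj.1 hN').of_iso ((resF k ι).mapIso e)

lemma supportedAway_kernel_of_isIso_resF_map {M M' : CMod k R} (f : M ⟶ M')
    [IsIso ((resF k ι).map f)] : SupportedAway k ι (kernel f) :=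
  supportedAway_iff_isZero_resF_obj.2 <|
    (isZero_kernel_of_mono _).of_iso (PreservesKernel.iso (resF k ι) f)

lemma supportedAway_cokernel_of_isIso_resF_map {M M' : CMod k R} (f : M ⟶ M')
    [IsIso ((resF k ι).map f)] : SupportedAway k ι (cokernel f) :=
  supportedAway_iff_isZero_resF_obj.2 <|
    (isZero_cokernel_of_epi _).of_iso (PreservesCokernel.iso (resF k ι) f)

lemma isIso_resF_map_f_of_supportedAway {Sc : ShortComplex (CMod k R)} (hSc : Sc.ShortExact)
    (hX₃ : SupportedAway k ι Sc.X₃) : IsIso ((resF k ι).map Sc.f) :=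
  (hSc.map_of_exact (resF k ι)).isIso_f_iff.2 (supportedAway_iff_isZero_resF_obj.1 hX₃)

variable {KR : CMod k S ⥤ CMod k R} (adj : resF k ι ⊣ KR)

lemma stable_of_isIso_unit_app {M : CMod k R} [IsIso (adj.unit.app M)] : Stable k ι M :=
  fun _ hN f => (cancel_mono (adj.unit.app M)).1 <| by
    rw [zero_comp]
    exact adj.hom_eq_zero_of_isZero_obj (supportedAway_iff_isZero_resF_obj.1 hN) _

lemma ext1Vanishes_of_isIso_unit_app {M : CMod k R} [IsIso (adj.unit.app M)] {N : CMod k R}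
    (hN : SupportedAway k ι N) : Ext1Vanishes N M := by
  intro Sc hSc e₁ e₃
  have := isIso_resF_map_f_of_supportedAway hSc (hN.of_iso e₃)
  have : IsIso (adj.unit.app Sc.X₁) := (NatTrans.isIso_app_iff_of_iso _ e₁).2 ‹_›
  have := adj.isSplitMono_of_isIso_unit_app_of_isIso_map Sc.f
  exact ⟨.ofExactOfRetraction Sc hSc.exact (retraction Sc.f) (IsSplitMono.id Sc.f) hSc.epi_g⟩

variable [ι.Full] [ι.Faithful]

/-- `KR` agrees with the right Kan extension along `ι.op`, whose counit is invertible because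
`ι` is fully faithful. -/
instance isIso_counit_app (X : CMod k S) : IsIso (adj.counit.app X) := by
  rw [← Adjunction.rightAdjointUniq_hom_app_counit adj (ι.op.ranAdjunction (ModuleCat k)) X]
  have : IsIso ((ι.op.ranAdjunction (ModuleCat k)).counit.app X) := inferInstance
  exact IsIso.comp_isIso' inferInstance this

instance isIso_resF_map_unit_app (M : CMod k R) : IsIso ((resF k ι).map (adj.unit.app M)) :=
  IsIso.of_isIso_fac_right (h := 𝟙 _) (adj.left_triangle_components M)

lemma isIso_unit_app_of_stable_of_ext1Vanishes {M : CMod k R} (hM : Stable k ι M)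
    (hExt : ∀ N : CMod k R, SupportedAway k ι N → Ext1Vanishes N M) :
    IsIso (adj.unit.app M) := by
  set η := adj.unit.app M
  have : Mono η := Preadditive.mono_of_kernel_zero <|
    hM _ (supportedAway_kernel_of_isIso_resF_map η) _
  have hCoker := supportedAway_cokernel_of_isIso_resF_map (ι := ι) η
  let Sc := ShortComplex.mk η (cokernel.π η) (cokernel.condition η)
  have hSc : Sc.ShortExact :=
    { exact := ShortComplex.exact_of_g_is_cokernel _ (cokernelIsCokernel η) }
  obtain ⟨sp⟩ := hExt _ hCoker Sc hSc (Iso.refl _) (Iso.refl _)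
  exact sp.isIso_f_of_s_eq_zero <|
    adj.hom_eq_zero_of_isZero_obj (supportedAway_iff_isZero_resF_obj.1 hCoker) _

end Restriction

theorem unit_iso_iff_stable_and_ext_vanishes_general
    (k : Type) [Field k]
    (S R : Type) [SmallCategory S] [SmallCategory R]
    (ι : S ⥤ R) [ι.Full] [ι.Faithful]
    (KR : CMod k S ⥤ CMod k R) (adj : resF k ι ⊣ KR)
    (M : CMod k R) :
    IsIso (adj.unit.app M)
      ↔ Stable k ι M ∧
        (∀ N : CMod k R, SupportedAway k ι N → Ext1Vanishes N M) :=
  ⟨fun _ => ⟨stable_of_isIso_unit_app adj, fun _ => ext1Vanishes_of_isIso_unit_app adj⟩,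
    fun ⟨hM, hExt⟩ => isIso_unit_app_of_stable_of_ext1Vanishes adj hM hExt⟩

/-- the adjunction unit `M ⟶ K_R (res M)` is invertible if and only if `M` is
stable and `Ext¹(N, M) = 0` for every module `N` in the kernel of `res` (i.e. supported
away from `S`). -/
theorem unit_iso_iff_stable_and_ext_vanishes
    (k : Type) [Field k]
    (S R : Type) [SmallCategory S] [SmallCategory R]
    [Preadditive S] [Preadditive R] [CategoryTheory.Linear k S] [CategoryTheory.Linear k R]
    (ι : S ⥤ R) [ι.Full] [ι.Faithful]
    (KR : CMod k S ⥤ CMod k R) (adj : resF k ι ⊣ KR)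
    (M : CMod k R) :
    IsIso (adj.unit.app M)
      ↔ Stable k ι M ∧
        (∀ N : CMod k R, SupportedAway k ι N → Ext1Vanishes N M) :=
  unit_iso_iff_stable_and_ext_vanishes_general k S R ι KR adj M
end

section
/- Let R be a k-linear category, S a full subcategory, and define the intermediate extension K_{LR}(M) as the image of the canonical map K_L(M) → K_R(M) for an S-module M. Then an R-module M is bistable (both stable and costable) if and only if K_{LR}(res M) ≅ M. -/
open CategoryTheory CategoryTheory.Limits Opposite

section KanExtensions

variable (k : Type) [Field k] {S R : Type} [SmallCategory S] [SmallCategory R]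
  (ι : S ⥤ R) (KL KR : CMod k S ⥤ CMod k R)
  (adjL : KL ⊣ resF k ι) (adjR : resF k ι ⊣ KR)
  (hiso : ∀ M : CMod k S, IsIso (adjL.unit.app M))

/-- The canonical natural map `K_L M ⟶ K_R M`, corresponding under the adjunction
`res ⊣ K_R` to the inverse of the unit `M ≅ res (K_L M)`. -/
noncomputable def canMap (M : CMod k S) : KL.obj M ⟶ KR.obj M :=
  (adjR.homEquiv (KL.obj M) M) (by haveI := hiso M; exact inv (adjL.unit.app M))

/-- The intermediate extension `K_{LR} M`: the image of the canonical map `K_L M ⟶ K_R M`. -/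
noncomputable def KlrObj (M : CMod k S) : CMod k R :=
  Limits.image (canMap k ι KL KR adjL adjR hiso M)

/-- `KK(M) = ker (K_L M ⟶ K_{LR} M)`. -/
noncomputable def KKobj (M : CMod k S) : CMod k R :=
  Limits.kernel (Limits.factorThruImage (canMap k ι KL KR adjL adjR hiso M))

/-- `CK(M) = coker (K_{LR} M ⟶ K_R M)`. -/
noncomputable def CKobj (M : CMod k S) : CMod k R :=
  Limits.cokernel (Limits.image.ι (canMap k ι KL KR adjL adjR hiso M))

end KanExtensions

/-! Restricting the counit `K_L (res M) ⟶ M` gives a split epi and restricting the unit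
`M ⟶ K_R (res M)` a split mono, so their cokernel and kernel are supported away from `S`;
costability and stability of `M` therefore make them epi and mono, and the canonical map at
`res M` is their composite, with image `M`. Conversely, by adjunction `K_L N` is costable and
`K_R N` stable, and these properties pass to quotients and to submodules respectively. -/

section Supports

variable {k : Type} [Field k] {S R : Type} [SmallCategory S] [SmallCategory R] (ι : S ⥤ R)

lemma isZero_resF_obj_of_supportedAway {T : CMod k R} (hT : SupportedAway k ι T) :
    IsZero ((resF k ι).obj T) :=
  Functor.isZero _ fun s => hT s.unop

lemma Stable.of_mono {X Y : CMod k R} (hY : Stable k ι Y) (g : X ⟶ Y) [Mono g] :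
    Stable k ι X :=
  fun T hT f => zero_of_comp_mono g (by rw [hY T hT (f ≫ g)])

lemma Costable.of_epi {X Y : CMod k R} (hX : Costable k ι X) (g : X ⟶ Y) [Epi g] :
    Costable k ι Y :=
  fun T hT f => zero_of_epi_comp g (by rw [hX T hT (g ≫ f)])

lemma supportedAway_kernel {X Y : CMod k R} (f : X ⟶ Y) [Mono ((resF k ι).map f)] :
    SupportedAway k ι (kernel f) := fun s =>
  have : Mono (((evaluation Rᵒᵖ (ModuleCat k)).obj (op (ι.obj s))).map f) :=
    inferInstanceAs (Mono (((resF k ι).map f).app (op s)))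
  (PreservesKernel.iso ((evaluation Rᵒᵖ (ModuleCat k)).obj (op (ι.obj s))) f).isZero_iff.mpr
    (isZero_kernel_of_mono _)

lemma supportedAway_cokernel {X Y : CMod k R} (f : X ⟶ Y) [Epi ((resF k ι).map f)] :
    SupportedAway k ι (cokernel f) := fun s =>
  have : Epi (((evaluation Rᵒᵖ (ModuleCat k)).obj (op (ι.obj s))).map f) :=
    inferInstanceAs (Epi (((resF k ι).map f).app (op s)))
  (PreservesCokernel.iso ((evaluation Rᵒᵖ (ModuleCat k)).obj (op (ι.obj s))) f).isZero_iff.mpr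
    (isZero_cokernel_of_epi _)

lemma Stable.mono_of_mono_resF_map {X Y : CMod k R} (hX : Stable k ι X) (f : X ⟶ Y)
    [Mono ((resF k ι).map f)] : Mono f :=
  Abelian.mono_of_kernel_ι_eq_zero f (hX _ (supportedAway_kernel ι f) _)

lemma Costable.epi_of_epi_resF_map {X Y : CMod k R} (hY : Costable k ι Y) (f : X ⟶ Y)
    [Epi ((resF k ι).map f)] : Epi f :=
  Abelian.epi_of_cokernel_π_eq_zero f (hY _ (supportedAway_cokernel ι f) _)

end Supports

section Adjoints

variable {k : Type} [Field k] {S R : Type} [SmallCategory S] [SmallCategory R] {ι : S ⥤ R}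
  {KL KR : CMod k S ⥤ CMod k R}

lemma costable_obj_of_adjunction (adjL : KL ⊣ resF k ι) (N : CMod k S) :
    Costable k ι (KL.obj N) := fun _ hT _ =>
  (adjL.homEquiv N _).injective ((isZero_resF_obj_of_supportedAway ι hT).eq_of_tgt _ _)

lemma stable_obj_of_adjunction (adjR : resF k ι ⊣ KR) (N : CMod k S) :
    Stable k ι (KR.obj N) := fun _ hT _ =>
  (adjR.homEquiv _ N).symm.injective ((isZero_resF_obj_of_supportedAway ι hT).eq_of_src _ _)

instance (adjR : resF k ι ⊣ KR) (M : CMod k R) :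
    IsSplitMono ((resF k ι).map (adjR.unit.app M)) :=
  .mk' ⟨_, adjR.left_triangle_components M⟩

instance (adjL : KL ⊣ resF k ι) (M : CMod k R) :
    IsSplitEpi ((resF k ι).map (adjL.counit.app M)) :=
  .mk' ⟨_, adjL.right_triangle_components M⟩

lemma canMap_resF_obj (adjL : KL ⊣ resF k ι) (adjR : resF k ι ⊣ KR)
    (hiso : ∀ M : CMod k S, IsIso (adjL.unit.app M)) (M : CMod k R) :
    canMap k ι KL KR adjL adjR hiso ((resF k ι).obj M)
      = adjL.counit.app M ≫ adjR.unit.app M := by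
  have : IsIso (adjL.unit.app ((resF k ι).obj M)) := hiso _
  have hinv : inv (adjL.unit.app ((resF k ι).obj M)) = (resF k ι).map (adjL.counit.app M) :=
    IsIso.inv_eq_of_hom_inv_id (adjL.right_triangle_components M)
  rw [canMap, hinv, Adjunction.homEquiv_unit]
  exact (adjR.unit.naturality (adjL.counit.app M)).symm

end Adjoints

theorem bistable_iff_intermediate_extension_general
    (k : Type) [Field k]
    (S R : Type) [SmallCategory S] [SmallCategory R]
    (ι : S ⥤ R)
    (KL KR : CMod k S ⥤ CMod k R)
    (adjL : KL ⊣ resF k ι) (adjR : resF k ι ⊣ KR)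
    (hiso : ∀ M : CMod k S, IsIso (adjL.unit.app M))
    (M : CMod k R) :
    (Stable k ι M ∧ Costable k ι M)
      ↔ Nonempty (KlrObj k ι KL KR adjL adjR hiso ((resF k ι).obj M) ≅ M) := by
  let c := canMap k ι KL KR adjL adjR hiso ((resF k ι).obj M)
  constructor
  · rintro ⟨hst, hcost⟩
    have : Epi (adjL.counit.app M) := hcost.epi_of_epi_resF_map ι _
    have : StrongEpi (adjL.counit.app M) := strongEpi_of_epi _
    have : Mono (adjR.unit.app M) := hst.mono_of_mono_resF_map ι _
    exact ⟨(image.isoStrongEpiMono _ _ (canMap_resF_obj adjL adjR hiso M).symm).symm⟩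
  · rintro ⟨e⟩
    have e : image c ≅ M := e
    exact ⟨(stable_obj_of_adjunction adjR _).of_mono ι (e.inv ≫ image.ι c),
      (costable_obj_of_adjunction adjL _).of_epi ι (factorThruImage c ≫ e.hom)⟩

/-- an `R`-module `M` is bistable (both stable and costable) if and only if
`K_{LR}(res M) ≅ M`, where `K_{LR}` is the intermediate extension, the image of the
canonical map `K_L → K_R`. -/
theorem bistable_iff_intermediate_extension
    (k : Type) [Field k]
    (S R : Type) [SmallCategory S] [SmallCategory R]
    [Preadditive S] [Preadditive R] [CategoryTheory.Linear k S] [CategoryTheory.Linear k R]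
    (ι : S ⥤ R) [ι.Full] [ι.Faithful]
    (KL KR : CMod k S ⥤ CMod k R)
    (adjL : KL ⊣ resF k ι) (adjR : resF k ι ⊣ KR)
    (hiso : ∀ M : CMod k S, IsIso (adjL.unit.app M))
    (M : CMod k R) :
    (Stable k ι M ∧ Costable k ι M)
      ↔ Nonempty (KlrObj k ι KL KR adjL adjR hiso ((resF k ι).obj M) ≅ M) :=
  bistable_iff_intermediate_extension_general k S R ι KL KR adjL adjR hiso M
end
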